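/- arXiv:2605.20106 — 3 statements merged into one kernel-verified Lean document; each statement's English description precedes it below -/
import Mathlib

section
/- Let (ℝ^{d+2}, q̃) be a quadratic space of signature (d+1, 1) and let u_1,…,u_n, u_∞ be vectors with q̃(u_i) = −m_i² < 0 for 1 ≤ i ≤ n and q̃(u_∞) = 0. Suppose all masses m_i are nonzero and every subfamily of {u_i : i ∈ I} with I ⊂ {1,…,n,∞} of cardinality at most d+1 is linearly independent. Then for every such I intersecting {1,…,n}, the Gram determinant det(⟨u_i, u_j⟩)_{i,j ∈ I} is nonzero. -/
/-!
If the Gram determinant vanished, a nonzero vector `x` in the span of the family would be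
orthogonal to the whole span, hence isotropic and orthogonal to some timelike `u_k`. But the
orthogonal complement of a timelike vector in a Lorentzian space is positive definite (reverse
Cauchy–Schwarz), so `x = 0`.
-/

/-- The standard Lorentzian quadratic form of signature `(d+1, 1)` on `ℝ^{d+2}`. -/
noncomputable def lorentzQ (d : ℕ) (x : Fin (d + 2) → ℝ) : ℝ :=
  (∑ i, x i ^ 2) - 2 * x (Fin.last (d + 1)) ^ 2

/-- Its polar bilinear form `⟨u,v⟩ = q̃(u+v) − q̃(u) − q̃(v)`. -/
noncomputable def lorentzPol (d : ℕ) (x y : Fin (d + 2) → ℝ) : ℝ :=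
  lorentzQ d (x + y) - lorentzQ d x - lorentzQ d y

open Module Submodule Set

theorem LinearIndependent.det_bilinForm_ne_zero {K M ι : Type*} [Field K] [AddCommGroup M]
    [Module K M] [Fintype ι] [DecidableEq ι] {v : ι → M} (hv : LinearIndependent K v)
    (B : LinearMap.BilinForm K M) (hB : (B.restrict (span K (range v))).SeparatingLeft) :
    (Matrix.of fun i j => B (v i) (v j)).det ≠ 0 := by
  convert (LinearMap.separatingLeft_iff_det_ne_zero (Basis.span hv)).1 hB using 2
  ext i j
  simp [LinearMap.toMatrix₂_apply]

lemma lorentzQ_eq_sum_castSucc (d : ℕ) (x : Fin (d + 2) → ℝ) :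
    lorentzQ d x = ∑ i : Fin (d + 1), x i.castSucc ^ 2 - x (Fin.last (d + 1)) ^ 2 := by
  rw [lorentzQ, Fin.sum_univ_castSucc]
  ring

lemma lorentzPol_eq_sum_castSucc (d : ℕ) (x y : Fin (d + 2) → ℝ) :
    lorentzPol d x y = 2 * (∑ i : Fin (d + 1), x i.castSucc * y i.castSucc
      - x (Fin.last (d + 1)) * y (Fin.last (d + 1))) := by
  simp only [lorentzPol, lorentzQ_eq_sum_castSucc, Pi.add_apply, add_sq, Finset.sum_add_distrib,
    mul_assoc, ← Finset.mul_sum]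
  ring

lemma lorentzPol_self (d : ℕ) (x : Fin (d + 2) → ℝ) : lorentzPol d x x = 2 * lorentzQ d x := by
  simp only [lorentzPol_eq_sum_castSucc, lorentzQ_eq_sum_castSucc, sq]

noncomputable def lorentzBilin (d : ℕ) : LinearMap.BilinForm ℝ (Fin (d + 2) → ℝ) :=
  LinearMap.mk₂ ℝ (lorentzPol d)
    (fun x x' y => by
      simp only [lorentzPol_eq_sum_castSucc, Pi.add_apply, add_mul, Finset.sum_add_distrib]; ring)
    (fun c x y => by
      simp only [lorentzPol_eq_sum_castSucc, Pi.smul_apply, smul_eq_mul, mul_assoc,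
        ← Finset.mul_sum]; ring)
    (fun x y y' => by
      simp only [lorentzPol_eq_sum_castSucc, Pi.add_apply, mul_add, Finset.sum_add_distrib]; ring)
    (fun c x y => by
      simp only [lorentzPol_eq_sum_castSucc, Pi.smul_apply, smul_eq_mul, mul_left_comm _ c,
        ← Finset.mul_sum]; ring)

@[simp]
lemma lorentzBilin_apply (d : ℕ) (x y : Fin (d + 2) → ℝ) :
    lorentzBilin d x y = lorentzPol d x y :=
  rfl

lemma lorentzQ_pos_of_lorentzPol_eq_zero {d : ℕ} {x w : Fin (d + 2) → ℝ}
    (hw : lorentzQ d w < 0) (hxw : lorentzPol d x w = 0) (hx : x ≠ 0) : 0 < lorentzQ d x := by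
  rw [lorentzQ_eq_sum_castSucc] at hw ⊢
  rw [lorentzPol_eq_sum_castSucc] at hxw
  set L := Fin.last (d + 1)
  by_contra! hq
  have hxL : x L = 0 := by
    by_contra hxL
    have hxL2 : 0 < x L ^ 2 := by positivity
    have hw' : 0 ≤ ∑ i : Fin (d + 1), w i.castSucc ^ 2 := by positivity
    have hcs := Finset.sum_mul_sq_le_sq_mul_sq Finset.univ (fun i => x (Fin.castSucc i))
      (fun i => w (Fin.castSucc i))
    rw [show ∑ i : Fin (d + 1), x i.castSucc * w i.castSucc = x L * w L by linarith] at hcs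
    nlinarith [mul_le_mul_of_nonneg_right hq hw', mul_lt_mul_of_pos_left hw hxL2]
  have hx' : ∀ i : Fin (d + 1), x i.castSucc = 0 := by
    have hsum : ∑ i : Fin (d + 1), x i.castSucc ^ 2 = 0 :=
      le_antisymm (by simpa [hxL] using hq) (by positivity)
    simpa using (Finset.sum_eq_zero_iff_of_nonneg fun i _ => sq_nonneg _).1 hsum
  exact hx (funext fun j => Fin.lastCases hxL hx' j)

lemma lorentzBilin_restrict_separatingLeft {d : ℕ} {W : Submodule ℝ (Fin (d + 2) → ℝ)}
    {w : Fin (d + 2) → ℝ} (hwW : w ∈ W) (hw : lorentzQ d w < 0) :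
    ((lorentzBilin d).restrict W).SeparatingLeft := by
  intro x hx
  by_contra hx0
  have hxx : lorentzPol d x x = 0 := hx x
  rw [lorentzPol_self, mul_eq_zero, or_iff_right two_ne_zero] at hxx
  exact (lorentzQ_pos_of_lorentzPol_eq_zero hw (hx ⟨w, hwW⟩) (by simpa using hx0)).ne' hxx

theorem gram_determinant_ne_zero_of_linearIndependent_general
    (d n : ℕ) (u : Fin n → (Fin (d + 2) → ℝ)) (uinf : Fin (d + 2) → ℝ)
    (m : Fin n → ℝ) (hm : ∀ i, m i ≠ 0)
    (hqu : ∀ i, lorentzQ d (u i) = -(m i) ^ 2)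
    (hindep : ∀ s : Finset (Option (Fin n)), s.card ≤ d + 1 →
      LinearIndependent ℝ (fun i : ↥s => (i : Option (Fin n)).elim uinf u)) :
    ∀ s : Finset (Option (Fin n)), s.card ≤ d + 1 → (∃ i ∈ s, i ≠ none) →
      Matrix.det (Matrix.of fun i j : ↥s =>
        lorentzPol d ((i : Option (Fin n)).elim uinf u)
          ((j : Option (Fin n)).elim uinf u)) ≠ 0 := by
  rintro s hcard ⟨_, hks, hk⟩
  obtain ⟨k, rfl⟩ := Option.ne_none_iff_exists'.mp hk
  have hneg : lorentzQ d (u k) < 0 := by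
    rw [hqu k, neg_lt_zero]
    exact pow_two_pos_of_ne_zero (hm k)
  exact (hindep s hcard).det_bilinForm_ne_zero (lorentzBilin d)
    (lorentzBilin_restrict_separatingLeft (subset_span ⟨⟨some k, hks⟩, rfl⟩) hneg)

/-- In a Lorentzian space `(ℝ^{d+2}, q̃)` of signature `(d+1,1)`, let
`u_1,…,u_n, u_∞` be vectors with `q̃(u_i) = −m_i² < 0` (all `m_i ≠ 0`) and
`q̃(u_∞) = 0`.  If every subfamily indexed by `I ⊆ {1,…,n,∞}` of cardinality
at most `d+1` is linearly independent, then for every such `I` meeting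
`{1,…,n}` the Gram determinant `det(⟨u_i, u_j⟩)_{i,j ∈ I}` is nonzero.
(The index `∞` is encoded by `none : Option (Fin n)`.) -/
theorem gram_determinant_ne_zero_of_linearIndependent
    (d n : ℕ) (u : Fin n → (Fin (d + 2) → ℝ)) (uinf : Fin (d + 2) → ℝ)
    (m : Fin n → ℝ) (hm : ∀ i, m i ≠ 0)
    (hqu : ∀ i, lorentzQ d (u i) = -(m i) ^ 2)
    (hqinf : lorentzQ d uinf = 0)
    (hindep : ∀ s : Finset (Option (Fin n)), s.card ≤ d + 1 →
      LinearIndependent ℝ (fun i : ↥s => (i : Option (Fin n)).elim uinf u)) :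
    ∀ s : Finset (Option (Fin n)), s.card ≤ d + 1 → (∃ i ∈ s, i ≠ none) →
      Matrix.det (Matrix.of fun i j : ↥s =>
        lorentzPol d ((i : Option (Fin n)).elim uinf u)
          ((j : Option (Fin n)).elim uinf u)) ≠ 0 :=
  gram_determinant_ne_zero_of_linearIndependent_general d n u uinf m hm hqu hindep
end

section
/- Let U, U′ be d × n complex matrices of rank d ≤ n, and let Q, Q′ be invertible symmetric d × d complex matrices such that Uᵀ Q U = U′ᵀ Q′ U′. Then there exists an invertible d × d matrix A with A U = U′ and Aᵀ Q′ A = Q. -/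
open Matrix

/-- If a `d × n` matrix over a field has rank `d`, it has a right inverse. -/
lemma exists_right_inverse_of_rank_eq {d n : ℕ}
    (U : Matrix (Fin d) (Fin n) ℂ) (hU : U.rank = d) :
    ∃ V : Matrix (Fin n) (Fin d) ℂ, U * V = 1 := by
  have hsurj : Function.Surjective U.mulVecLin := by
    rw [← LinearMap.range_eq_top]
    apply Submodule.eq_top_of_finrank_eq
    simpa [Matrix.rank] using hU
  obtain ⟨g, hg⟩ := U.mulVecLin.exists_rightInverse_of_surjective
    (LinearMap.range_eq_top.2 hsurj)
  refine ⟨LinearMap.toMatrix' g, ?_⟩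
  apply Matrix.toLin'.injective
  rw [Matrix.toLin'_mul, Matrix.toLin'_one, Matrix.toLin'_toMatrix']
  exact hg

/-- Let `U, U′` be `d × n` complex matrices of (maximal) rank `d ≤ n`, and let
`Q, Q′` be invertible symmetric `d × d` complex matrices with
`Uᵀ Q U = U′ᵀ Q′ U′`.  Then there exists an invertible `d × d` matrix `A` with
`A U = U′` and `Aᵀ Q′ A = Q`. -/
theorem kinematics_with_same_invariants
    {d n : ℕ} (hdn : d ≤ n)
    (U U' : Matrix (Fin d) (Fin n) ℂ) (hU : U.rank = d) (hU' : U'.rank = d)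
    (Q Q' : Matrix (Fin d) (Fin d) ℂ) (hQ : Q.IsSymm) (hQ' : Q'.IsSymm)
    (hQinv : IsUnit Q.det) (hQ'inv : IsUnit Q'.det)
    (h : U.transpose * Q * U = U'.transpose * Q' * U') :
    ∃ A : Matrix (Fin d) (Fin d) ℂ,
      IsUnit A.det ∧ A * U = U' ∧ A.transpose * Q' * A = Q := by
  obtain ⟨V, hV⟩ := exists_right_inverse_of_rank_eq U hU
  set A := U' * V with hA
  -- Q U = Aᵀ Q' U'
  have key : Q * U = Aᵀ * Q' * U' := by
    have := congrArg (fun M => Vᵀ * M) h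
    simp only [hA, Matrix.transpose_mul] at this ⊢
    calc Q * U = Vᵀ * Uᵀ * Q * U := by
          rw [← Matrix.transpose_mul, hV]; simp
      _ = Vᵀ * U'ᵀ * Q' * U' := by
          simp only [Matrix.mul_assoc] at this ⊢; exact this
  have hAQ : Aᵀ * Q' * A = Q := by
    have h2 := congrArg (fun M => M * V) key
    rw [Matrix.mul_assoc Q, hV, Matrix.mul_one, Matrix.mul_assoc (Aᵀ * Q'), ← hA] at h2
    exact h2.symm
  have hAdet : IsUnit A.det := by
    have : Aᵀ.det * Q'.det * A.det = Q.det := by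
      rw [← Matrix.det_mul, ← Matrix.det_mul, hAQ]
    rw [Matrix.det_transpose] at this
    have h2 : IsUnit (A.det * Q'.det * A.det) := this ▸ hQinv
    exact (isUnit_of_mul_isUnit_left (by rwa [mul_assoc] at h2))
  refine ⟨A, hAdet, ?_, hAQ⟩
  -- Aᵀ Q' (A U - U') = 0
  have h2 : Aᵀ * Q' * (A * U) = Aᵀ * Q' * U' := by
    rw [← Matrix.mul_assoc, hAQ, key, Matrix.mul_assoc]
  have hAT : IsUnit Aᵀ.det := by rwa [Matrix.det_transpose]
  have h3 : Q' * (A * U) = Q' * U' := by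
    have := congrArg (fun M => Aᵀ⁻¹ * M) h2
    simpa [Matrix.mul_assoc, Matrix.nonsing_inv_mul_cancel_left _ _ hAT] using this
  have := congrArg (fun M => Q'⁻¹ * M) h3
  simpa [Matrix.nonsing_inv_mul_cancel_left _ _ hQ'inv] using this
end

section
/- Let (N, q) be a nondegenerate quadratic space of even dimension 2m+2 over a field k of characteristic 0, and let Λ, Λ′ ⊂ N be two Lagrangian (maximal isotropic) subspaces with dim(Λ ∩ Λ′) = m. Choose bases e_1,…,e_{m+1} of Λ and e_{m+2},…,e_{2m+2} with b(e_i, e_{j+m+1}) = δ_{ij}, yielding η_Λ = e_1 ∧ ⋯ ∧ e_{2m+2} ∈ det N, and similarly η_{Λ′}. Then η_Λ = −η_{Λ′}. -/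
/-!
Two frames adapted to the same Lagrangian `Λ` differ by a change of basis whose matrix is block
upper triangular `[[A, *], [0, D]]`, and the duality conditions force `Aᵀ D = 1`; so every
alternating map takes the same value on them. When `Λ ⊓ Λ'` has codimension one, take a basis `w`
of `Λ ⊓ Λ'`, `u ∈ Λ` and `v ∈ Λ'` with `b u v = 1`, and `d` dual to `w` and orthogonal to `u` and
`v`: then `(w, u | d, v)` is adapted to `Λ` and `(w, v | d, u)` to `Λ'`, and they differ by the
transposition of `u` and `v`.
-/

open Module Submodule QuadraticMap
open scoped Matrix

theorem Matrix.det_eq_one_of_toBlocks₂₁_eq_zero {ι R : Type*} [Fintype ι] [DecidableEq ι]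
    [CommRing R] {M : Matrix (ι ⊕ ι) (ι ⊕ ι) R} (h₂₁ : M.toBlocks₂₁ = 0)
    (h : M.toBlocks₁₁ᵀ * M.toBlocks₂₂ = 1) : M.det = 1 := by
  rw [← M.fromBlocks_toBlocks, h₂₁, Matrix.det_fromBlocks_zero₂₁, ← Matrix.det_transpose,
    ← Matrix.det_mul, h, Matrix.det_one]

theorem AlternatingMap.map_eq_det_smul {R M M' ι : Type*} [CommRing R] [AddCommGroup M]
    [Module R M] [AddCommGroup M'] [Module R M'] [Fintype ι] [DecidableEq ι]
    (F : M [⋀^ι]→ₗ[R] M') (B : Basis ι R M) (v : ι → M) : F v = B.det v • F B := by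
  have h : F = (LinearMap.toSpanSingleton R M' (F B)).compAlternatingMap B.det := by
    refine B.ext_alternating fun i hi => ?_
    let σ : Equiv.Perm ι := Equiv.ofBijective i (Finite.injective_iff_bijective.1 hi)
    change F (B ∘ σ) = (LinearMap.toSpanSingleton R M' (F B)).compAlternatingMap B.det (B ∘ σ)
    simp [AlternatingMap.map_perm, Basis.det_self]
  rw [h]
  simp [Basis.det_self]

theorem Sum.elim_snoc_comp_swap_last {α : Type*} {m : ℕ} (a b : Fin m → α) (x y : α) :
    Sum.elim (Fin.snoc a x) (Fin.snoc b y) ∘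
        Equiv.swap (Sum.inl (Fin.last m)) (Sum.inr (Fin.last m)) =
      Sum.elim (Fin.snoc a y : Fin (m + 1) → α) (Fin.snoc b x) := by
  funext s
  rcases s with i | i <;> induction i using Fin.lastCases <;>
    simp [Equiv.swap_apply_of_ne_of_ne, Fin.castSucc_ne_last]

theorem LinearIndependent.exists_bilin_dual {k N : Type*} [Field k] [AddCommGroup N] [Module k N]
    [FiniteDimensional k N] {ι : Type*} [DecidableEq ι]
    {b : LinearMap.BilinForm k N} (hb : b.Nondegenerate) {w : ι → N} (hw : LinearIndependent k w) :
    ∃ x : ι → N, ∀ i j, b (x j) (w i) = if i = j then 1 else 0 := by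
  choose φ hφ using fun j => LinearMap.exists_extend ((Basis.span hw).coord j)
  refine ⟨fun j => (b.toDual hb).symm (φ j), fun i j => ?_⟩
  rw [LinearMap.BilinForm.apply_toDual_symm_apply]
  have := congrArg (fun f => f ⟨w i, subset_span ⟨i, rfl⟩⟩) (hφ j)
  simp only [LinearMap.comp_apply, subtype_apply] at this
  rw [this, ← Basis.span_apply hw i, Basis.coord_apply, Basis.repr_self, Finsupp.single_apply]

namespace LagrangianVolume

variable {k N : Type*} [Field k] [AddCommGroup N] [Module k N] {q : QuadraticForm k N}
  {Λ Λ' : Submodule k N}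

theorem polarBilin_eq_zero_of_mem (hiso : ∀ x ∈ Λ, q x = 0) {x y : N} (hx : x ∈ Λ) (hy : y ∈ Λ) :
    polarBilin q x y = 0 := by
  simp [polar, hiso x hx, hiso y hy, hiso _ (add_mem hx hy)]

theorem orthogonal_polarBilin_eq_self [FiniteDimensional k N] (hq : (polarBilin q).Nondegenerate)
    (hiso : ∀ x ∈ Λ, q x = 0) (hdim : finrank k N = 2 * finrank k Λ) :
    LinearMap.BilinForm.orthogonal (polarBilin q) Λ = Λ := by
  have hle : Λ ≤ LinearMap.BilinForm.orthogonal (polarBilin q) Λ := fun x hx =>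
    LinearMap.BilinForm.mem_orthogonal_iff.2 fun y hy => polarBilin_eq_zero_of_mem hiso hy hx
  refine (eq_of_le_of_finrank_le hle ?_).symm
  rw [LinearMap.BilinForm.finrank_orthogonal hq, hdim]
  omega

theorem exists_polarBilin_eq_one [FiniteDimensional k N] (hq : (polarBilin q).Nondegenerate)
    (hiso : ∀ x ∈ Λ, q x = 0) (hdim : finrank k N = 2 * finrank k Λ) (hΛ' : ¬ Λ' ≤ Λ) :
    ∃ u ∈ Λ, ∃ v ∈ Λ', polarBilin q u v = 1 := by
  obtain ⟨v, hvΛ', hvΛ⟩ := SetLike.not_le_iff_exists.mp hΛ'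
  rw [← orthogonal_polarBilin_eq_self hq hiso hdim, LinearMap.BilinForm.mem_orthogonal_iff] at hvΛ
  push Not at hvΛ
  obtain ⟨u, hu, huv⟩ := hvΛ
  refine ⟨u, hu, (polarBilin q u v)⁻¹ • v, smul_mem _ _ hvΛ', ?_⟩
  rw [map_smul, smul_eq_mul, inv_mul_cancel₀ huv]

theorem exists_dual_orthogonal_hyperbolic [FiniteDimensional k N] {ι : Type*} [DecidableEq ι]
    (hq : (polarBilin q).Nondegenerate) (hiso : ∀ x ∈ Λ, q x = 0) (hiso' : ∀ x ∈ Λ', q x = 0)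
    {u v : N} (hu : u ∈ Λ) (hv : v ∈ Λ') (huv : polarBilin q u v = 1) {w : ι → N}
    (hwΛ : ∀ i, w i ∈ Λ) (hwΛ' : ∀ i, w i ∈ Λ') (hw : LinearIndependent k w) :
    ∃ d : ι → N, (∀ i j, polarBilin q (w i) (d j) = if i = j then 1 else 0) ∧
      ∀ j, polarBilin q u (d j) = 0 ∧ polarBilin q v (d j) = 0 := by
  obtain ⟨x, hx⟩ := hw.exists_bilin_dual hq
  have hsymm : ∀ y z, polarBilin q y z = polarBilin q z y := polar_comm q
  have huu := polarBilin_eq_zero_of_mem hiso hu hu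
  have hvv := polarBilin_eq_zero_of_mem hiso' hv hv
  have hvu : polarBilin q v u = 1 := by rw [hsymm, huv]
  refine ⟨fun j => x j - polarBilin q v (x j) • u - polarBilin q u (x j) • v, fun i j => ?_,
    fun j => ⟨?_, ?_⟩⟩
  all_goals simp only [map_sub, map_smul, smul_eq_mul]
  · rw [hsymm (w i), hx, polarBilin_eq_zero_of_mem hiso (hwΛ i) hu,
      polarBilin_eq_zero_of_mem hiso' (hwΛ' i) hv]
    ring
  · rw [huu, huv]
    ring
  · rw [hvu, hvv]
    ring

structure IsAdapted {ι : Type*} [DecidableEq ι] (q : QuadraticForm k N) (Λ : Submodule k N)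
    (g : ι ⊕ ι → N) : Prop where
  linearIndependent_inl : LinearIndependent k (g ∘ Sum.inl)
  span_inl : span k (Set.range (g ∘ Sum.inl)) = Λ
  polarBilin_inl_inr : ∀ i j, polarBilin q (g (Sum.inl i)) (g (Sum.inr j)) = if i = j then 1 else 0

section IsAdapted

variable {ι : Type*} [Fintype ι] [DecidableEq ι] {g h : ι ⊕ ι → N}

omit [Fintype ι] in
theorem IsAdapted.mem_inl (hg : IsAdapted q Λ g) (i : ι) : g (Sum.inl i) ∈ Λ :=
  hg.span_inl ▸ subset_span ⟨i, rfl⟩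

theorem IsAdapted.polarBilin_inl_sum (hiso : ∀ x ∈ Λ, q x = 0) (hg : IsAdapted q Λ g) (i : ι)
    (c : ι ⊕ ι → k) : polarBilin q (g (Sum.inl i)) (∑ s, c s • g s) = c (Sum.inr i) := by
  have hΛ : ∀ j, polarBilin q (g (Sum.inl i)) (g (Sum.inl j)) = 0 := fun j =>
    polarBilin_eq_zero_of_mem hiso (hg.mem_inl i) (hg.mem_inl j)
  rw [Fintype.sum_sum_type, map_add, map_sum, map_sum]
  simp only [map_smul, smul_eq_mul, hΛ, mul_zero, Finset.sum_const_zero, zero_add,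
    hg.polarBilin_inl_inr, mul_ite, mul_one, Finset.sum_ite_eq, Finset.mem_univ, if_true]

theorem IsAdapted.linearIndependent (hiso : ∀ x ∈ Λ, q x = 0) (hg : IsAdapted q Λ g) :
    LinearIndependent k g := by
  rw [Fintype.linearIndependent_iff]
  intro c hc
  have hinr : ∀ i, c (Sum.inr i) = 0 := fun i => by
    rw [← hg.polarBilin_inl_sum hiso i c, hc, map_zero]
  have hinl := Fintype.linearIndependent_iff.1 hg.linearIndependent_inl (c ∘ Sum.inl) (by
    simpa [Fintype.sum_sum_type, hinr] using hc)
  rintro (i | i)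
  exacts [hinl i, hinr i]

theorem IsAdapted.polarBilin_inl_eq_repr (hiso : ∀ x ∈ Λ, q x = 0) (hh : IsAdapted q Λ h)
    (B : Basis (ι ⊕ ι) k N) (hB : ⇑B = h) (l : ι) (x : N) :
    polarBilin q (h (Sum.inl l)) x = B.repr x (Sum.inr l) := by
  conv_lhs => rw [← B.sum_repr x, hB]
  exact hh.polarBilin_inl_sum hiso l _

theorem IsAdapted.det_eq_one (hiso : ∀ x ∈ Λ, q x = 0) (hg : IsAdapted q Λ g)
    (hh : IsAdapted q Λ h) (B : Basis (ι ⊕ ι) k N) (hB : ⇑B = h) : B.det g = 1 := by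
  have hrepr := hh.polarBilin_inl_eq_repr hiso B hB
  have h₂₁ : ∀ i l, B.repr (g (Sum.inl i)) (Sum.inr l) = 0 := fun i l => by
    rw [← hrepr, polarBilin_eq_zero_of_mem hiso (hh.mem_inl l) (hg.mem_inl i)]
  have hdual : ∀ i j, ∑ l, B.repr (g (Sum.inl i)) (Sum.inl l) * B.repr (g (Sum.inr j)) (Sum.inr l)
      = if i = j then 1 else 0 := fun i j =>
    calc _ = polarBilin q (∑ s, B.repr (g (Sum.inl i)) s • h s) (g (Sum.inr j)) := by
          rw [map_sum, LinearMap.sum_apply, Fintype.sum_sum_type]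
          simp only [map_smul, LinearMap.smul_apply, smul_eq_mul, h₂₁, zero_mul,
            Finset.sum_const_zero, add_zero, hrepr]
      _ = _ := by rw [← hB, B.sum_repr, hg.polarBilin_inl_inr]
  rw [Basis.det_apply]
  refine Matrix.det_eq_one_of_toBlocks₂₁_eq_zero ?_ ?_
  · ext l i
    simpa [Matrix.toBlocks₂₁, Basis.toMatrix_apply] using h₂₁ i l
  · ext i j
    simpa [Matrix.mul_apply, Matrix.toBlocks₁₁, Matrix.toBlocks₂₂, Basis.toMatrix_apply,
      Matrix.one_apply] using hdual i j

theorem IsAdapted.alternatingMap_eq [FiniteDimensional k N] {M : Type*} [AddCommGroup M]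
    [Module k M] (hdim : finrank k N = 2 * Fintype.card ι) (hiso : ∀ x ∈ Λ, q x = 0)
    (hg : IsAdapted q Λ g) (hh : IsAdapted q Λ h) (F : N [⋀^(ι ⊕ ι)]→ₗ[k] M) : F g = F h := by
  have hcard : Fintype.card (ι ⊕ ι) = finrank k N := by rw [Fintype.card_sum, hdim]; ring
  let B := basisOfLinearIndependentOfCardEqFinrank' h (hh.linearIndependent hiso) hcard
  have hB : ⇑B = h := coe_basisOfLinearIndependentOfCardEqFinrank' _ _ _
  rw [F.map_eq_det_smul B g, hB, hg.det_eq_one hiso hh B hB, one_smul]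

end IsAdapted

theorem isAdapted_snoc {m : ℕ} (hΛdim : finrank k Λ = m + 1) (hiso' : ∀ x ∈ Λ', q x = 0)
    {w d : Fin m → N} {u v : N} (hw : LinearIndependent k w) (hwΛ : ∀ i, w i ∈ Λ)
    (hwΛ' : ∀ i, w i ∈ Λ') (hu : u ∈ Λ) (hv : v ∈ Λ') (huv : polarBilin q u v = 1)
    (hwd : ∀ i j, polarBilin q (w i) (d j) = if i = j then 1 else 0)
    (hud : ∀ j, polarBilin q u (d j) = 0) :
    IsAdapted q Λ (Sum.elim (Fin.snoc w u) (Fin.snoc d v)) := by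
  have huΛ' : u ∉ span k (Set.range w) := fun hu' => by
    have := polarBilin_eq_zero_of_mem hiso' (span_le.2 (Set.range_subset_iff.2 hwΛ') hu') hv
    rw [huv] at this
    exact one_ne_zero this
  have hind : LinearIndependent k (Fin.snoc w u : Fin (m + 1) → N) :=
    linearIndependent_finSnoc.2 ⟨hw, huΛ'⟩
  have hmem : ∀ i, (Fin.snoc w u : Fin (m + 1) → N) i ∈ Λ := Fin.lastCases (by simpa) (by simpa)
  refine ⟨hind, ?_, fun i j => ?_⟩
  · have : FiniteDimensional k Λ := .of_finrank_pos (by omega)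
    refine eq_of_le_of_finrank_le (span_le.2 (Set.range_subset_iff.2 hmem)) ?_
    rw [Sum.elim_comp_inl, hΛdim, finrank_span_eq_card hind, Fintype.card_fin]
  · induction i using Fin.lastCases <;> induction j using Fin.lastCases <;>
      simp [huv, hwd, hud, polarBilin_eq_zero_of_mem hiso' (hwΛ' _) hv, Fin.castSucc_ne_last,
        (Fin.castSucc_ne_last _).symm]

theorem exists_isAdapted_comp_swap {m : ℕ} (hdim : finrank k N = 2 * m + 2)
    (hq : (polarBilin q).Nondegenerate) (hiso : ∀ x ∈ Λ, q x = 0) (hiso' : ∀ x ∈ Λ', q x = 0)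
    (hΛdim : finrank k Λ = m + 1) (hΛ'dim : finrank k Λ' = m + 1)
    (hint : finrank k ↥(Λ ⊓ Λ') = m) :
    ∃ h : Fin (m + 1) ⊕ Fin (m + 1) → N, IsAdapted q Λ h ∧
      IsAdapted q Λ' (h ∘ Equiv.swap (Sum.inl (Fin.last m)) (Sum.inr (Fin.last m))) := by
  have : FiniteDimensional k N := .of_finrank_pos (by omega)
  have hΛ'Λ : ¬ Λ' ≤ Λ := fun hle => by
    rw [inf_eq_right.2 hle, hΛ'dim] at hint
    omega
  obtain ⟨u, hu, v, hv, huv⟩ := exists_polarBilin_eq_one hq hiso (by omega) hΛ'Λ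
  let W := finBasisOfFinrankEq k ↥(Λ ⊓ Λ') hint
  have hw : LinearIndependent k fun i => (W i : N) :=
    W.linearIndependent.map' (Λ ⊓ Λ').subtype (ker_subtype _)
  have hwΛ : ∀ i, (W i : N) ∈ Λ := fun i => (W i).2.1
  have hwΛ' : ∀ i, (W i : N) ∈ Λ' := fun i => (W i).2.2
  obtain ⟨d, hwd, hd⟩ := exists_dual_orthogonal_hyperbolic hq hiso hiso' hu hv huv hwΛ hwΛ' hw
  have hvu : polarBilin q v u = 1 := (polar_comm q v u).trans huv
  refine ⟨Sum.elim (Fin.snoc _ u) (Fin.snoc d v),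
    isAdapted_snoc hΛdim hiso' hw hwΛ hwΛ' hu hv huv hwd fun j => (hd j).1, ?_⟩
  rw [Sum.elim_snoc_comp_swap_last]
  exact isAdapted_snoc hΛ'dim hiso hw hwΛ' hwΛ hv hu hvu hwd fun j => (hd j).2

theorem alternatingMap_eq_neg {M : Type*} [AddCommGroup M] [Module k M] {m : ℕ}
    (hdim : finrank k N = 2 * m + 2) (hq : (polarBilin q).Nondegenerate)
    (hiso : ∀ x ∈ Λ, q x = 0) (hiso' : ∀ x ∈ Λ', q x = 0)
    (hΛdim : finrank k Λ = m + 1) (hΛ'dim : finrank k Λ' = m + 1)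
    (hint : finrank k ↥(Λ ⊓ Λ') = m) {g g' : Fin (m + 1) ⊕ Fin (m + 1) → N}
    (hg : IsAdapted q Λ g) (hg' : IsAdapted q Λ' g')
    (F : N [⋀^(Fin (m + 1) ⊕ Fin (m + 1))]→ₗ[k] M) : F g = -F g' := by
  have : FiniteDimensional k N := .of_finrank_pos (by omega)
  have hcard : finrank k N = 2 * Fintype.card (Fin (m + 1)) := by rw [hdim, Fintype.card_fin]; ring
  obtain ⟨h, hh, hh'⟩ := exists_isAdapted_comp_swap hdim hq hiso hiso' hΛdim hΛ'dim hint
  rw [hg.alternatingMap_eq hcard hiso hh, hg'.alternatingMap_eq hcard hiso' hh',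
    F.map_swap h (by simp), neg_neg]

def halvesEquiv (m : ℕ) : Fin (m + 1) ⊕ Fin (m + 1) ≃ Fin (2 * m + 2) :=
  finSumFinEquiv.trans (finCongr (by omega))

theorem isAdapted_comp_halvesEquiv {m : ℕ} {w : Fin (2 * m + 2) → N}
    (hind : LinearIndependent k fun i : Fin (m + 1) => w (Fin.castLE (by omega) i))
    (hspan : span k (Set.range fun i : Fin (m + 1) => w (Fin.castLE (by omega) i)) = Λ)
    (hdual : ∀ i j : Fin (m + 1), polar q (w (Fin.castLE (by omega) i))
      (w ⟨(j : ℕ) + (m + 1), by have := j.isLt; omega⟩) = if i = j then 1 else 0) :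
    IsAdapted q Λ (w ∘ halvesEquiv m) := by
  have hinl : ∀ i, halvesEquiv m (Sum.inl i) = Fin.castLE (by omega) i := fun i => by
    simp [halvesEquiv, Fin.ext_iff]
  have hinr : ∀ j, halvesEquiv m (Sum.inr j) = ⟨(j : ℕ) + (m + 1), by have := j.isLt; omega⟩ :=
    fun j => by simp [halvesEquiv, Fin.ext_iff]
  have hcomp : w ∘ halvesEquiv m ∘ Sum.inl = fun i => w (Fin.castLE (by omega) i) :=
    funext fun i => congrArg w (hinl i)
  refine ⟨hcomp ▸ hind, hcomp ▸ hspan, fun i j => ?_⟩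
  simpa [hinl, hinr] using hdual i j

end LagrangianVolume

/-- Let `(N, q)` be a nondegenerate quadratic space of even dimension `2m+2`
over a field of characteristic `0`, and `Λ, Λ′` two Lagrangian (maximal
isotropic) subspaces with `dim(Λ ∩ Λ′) = m`.  Choose bases `e_1,…,e_{m+1}` of
`Λ` and vectors `e_{m+2},…,e_{2m+2}` with `b(e_i, e_{j+m+1}) = δ_{ij}`,
giving `η_Λ = e_1 ∧ ⋯ ∧ e_{2m+2} ∈ det N` (realized as a product of
generators in the exterior algebra), and similarly `η_{Λ′}` from `f`.
Then `η_Λ = −η_{Λ′}`. -/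
theorem lagrangian_volume_sign
    {k N : Type*} [Field k] [AddCommGroup N] [Module k N]
    (m : ℕ) (hdim : Module.finrank k N = 2 * m + 2)
    (q : QuadraticForm k N)
    (hq : LinearMap.BilinForm.Nondegenerate (QuadraticMap.polarBilin q))
    (Λ Λ' : Submodule k N)
    (hΛiso : ∀ x ∈ Λ, q x = 0) (hΛ'iso : ∀ x ∈ Λ', q x = 0)
    (hΛdim : Module.finrank k ↥Λ = m + 1) (hΛ'dim : Module.finrank k ↥Λ' = m + 1)
    (hint : Module.finrank k ↥(Λ ⊓ Λ') = m)
    (e f : Fin (2 * m + 2) → N)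
    (heind : LinearIndependent k fun i : Fin (m + 1) => e (Fin.castLE (by omega) i))
    (hespan : Submodule.span k
      (Set.range fun i : Fin (m + 1) => e (Fin.castLE (by omega) i)) = Λ)
    (hedual : ∀ i j : Fin (m + 1),
      QuadraticMap.polar (⇑q) (e (Fin.castLE (by omega) i))
        (e ⟨(j : ℕ) + (m + 1), by have := j.isLt; omega⟩) = if i = j then 1 else 0)
    (hfind : LinearIndependent k fun i : Fin (m + 1) => f (Fin.castLE (by omega) i))
    (hfspan : Submodule.span k
      (Set.range fun i : Fin (m + 1) => f (Fin.castLE (by omega) i)) = Λ')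
    (hfdual : ∀ i j : Fin (m + 1),
      QuadraticMap.polar (⇑q) (f (Fin.castLE (by omega) i))
        (f ⟨(j : ℕ) + (m + 1), by have := j.isLt; omega⟩) = if i = j then 1 else 0) :
    (List.ofFn fun i => ExteriorAlgebra.ι k (e i)).prod
      = -(List.ofFn fun i => ExteriorAlgebra.ι k (f i)).prod := by
  open LagrangianVolume in
  have key := alternatingMap_eq_neg hdim hq hΛiso hΛ'iso hΛdim hΛ'dim hint
    (isAdapted_comp_halvesEquiv heind hespan hedual)
    (isAdapted_comp_halvesEquiv hfind hfspan hfdual)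
    ((ExteriorAlgebra.ιMulti k (2 * m + 2)).domDomCongr (halvesEquiv m).symm)
  simpa only [AlternatingMap.domDomCongr_apply, Equiv.symm_symm, Function.comp_assoc,
    Equiv.self_comp_symm, Function.comp_id, ExteriorAlgebra.ιMulti_apply] using key
end
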